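/- Let Λ be a finite group with unit e, Γ a group, and for g ∈ Γ consider the matrix u(g) = Σ_{r,s ∈ Λ} e_{rs} ⊗ ν_{r s⁻¹}(g)·s over the universal C*-algebra C(G) generated by elements ν_γ(g) (γ ∈ Λ, g ∈ Γ) and the group Λ, subject to ν_γ(g)* = ν_{γ⁻¹}(g⁻¹), ν_γ(1) = δ_{γ,1}·1, ν_γ(gh) = Σ_{rs=γ} ν_r(g) ν_s(h), and s·ν_{rs}(g) = ν_{sr}(g)·s. Then u(g) is unitary: u(g)·u(g)* = 1 and u(g)*·u(g) = 1. -/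
import Mathlib


/-- In a unital `*`-algebra `Aₐ` generated by unitaries `π s` (for `s` in a finite group
`Λ`) and elements `ν γ g` (for `γ ∈ Λ`, `g ∈ Γ`) subject to the free-wreath-product
relations `(ν γ g)* = ν γ⁻¹ g⁻¹`, `ν γ 1 = δ_{γ,1}`, `ν γ (g h) = ∑_{r s = γ} ν r g ⋅ ν s h`
and `π s ⋅ ν (r s) g = ν (s r) g ⋅ π s`, the matrix
`u(g) = (ν (r s⁻¹) g ⋅ π s)_{r,s}` is unitary. -/
theorem stmt18 {Λ Γ Aₐ : Type*} [Group Λ] [Fintype Λ] [DecidableEq Λ] [Group Γ]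
    [Ring Aₐ] [StarRing Aₐ]
    (ν : Λ → Γ → Aₐ) (π : Λ → Aₐ)
    (hπunit : ∀ s : Λ, star (π s) * π s = 1 ∧ π s * star (π s) = 1)
    (hπmul : ∀ s t : Λ, π (s * t) = π s * π t)
    (hπstar : ∀ s : Λ, star (π s) = π s⁻¹)
    (hstar : ∀ (γ : Λ) (g : Γ), star (ν γ g) = ν γ⁻¹ g⁻¹)
    (hone : ∀ γ : Λ, ν γ (1 : Γ) = if γ = 1 then 1 else 0)
    (hmul : ∀ (γ : Λ) (g h : Γ), ν γ (g * h) = ∑ r : Λ, ν r g * ν (r⁻¹ * γ) h)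
    (hcomm : ∀ (r s : Λ) (g : Γ), π s * ν (r * s) g = ν (s * r) g * π s)
    (g : Γ)
    (U : Matrix Λ Λ Aₐ) (hU : U = Matrix.of fun r s => ν (r * s⁻¹) g * π s) :
    U * U.conjTranspose = 1 ∧ U.conjTranspose * U = 1 := by
  -- key summation identity
  have key : ∀ (a b : Γ) (r t : Λ),
      (∑ s : Λ, ν (r * s⁻¹) a * ν (s * t⁻¹) b) = ν (r * t⁻¹) (a * b) := by
    intro a b r t
    rw [hmul (r * t⁻¹) a b]
    refine Fintype.sum_equiv ((Equiv.inv Λ).trans (Equiv.mulLeft r)) _ _ fun s => ?_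
    have h1 : ((Equiv.inv Λ).trans (Equiv.mulLeft r)) s = r * s⁻¹ := rfl
    rw [h1]
    congr 2
    group
  constructor
  · ext r t
    rw [Matrix.mul_apply, Matrix.one_apply]
    have : ∀ s : Λ, U r s * U.conjTranspose s t
        = ν (r * s⁻¹) g * ν (s * t⁻¹) g⁻¹ := by
      intro s
      rw [hU, Matrix.conjTranspose_apply]
      simp only [Matrix.of_apply]
      rw [star_mul, hstar, mul_assoc, ← mul_assoc (π s), (hπunit s).2, one_mul,
        mul_inv_rev, inv_inv]
    simp only [this]
    rw [key, mul_inv_cancel, hone]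
    congr 1
    simp [mul_inv_eq_one]
  · ext r t
    rw [Matrix.mul_apply, Matrix.one_apply]
    have : ∀ s : Λ, U.conjTranspose r s * U s t
        = star (π r) * (ν (r * s⁻¹) g⁻¹ * ν (s * t⁻¹) g) * π t := by
      intro s
      rw [hU, Matrix.conjTranspose_apply]
      simp only [Matrix.of_apply]
      rw [star_mul, hstar, mul_inv_rev, inv_inv]
      rw [mul_assoc, mul_assoc, mul_assoc]
    simp only [this]
    rw [← Finset.sum_mul, ← Finset.mul_sum, key, inv_mul_cancel, hone]
    by_cases h : r = t
    · subst h
      simp [(hπunit r).1]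
    · have : r * t⁻¹ ≠ 1 := by simpa [mul_inv_eq_one] using h
      simp [this, h]
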